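/- Let s ∈ (0,1), p' ∈ (1,∞), and g : ℝ^n → ℝ locally integrable. Then for every x ∈ ℝ^n and t > 0, (∫_{ℝ^n \ B(x,2t)} |g(z) − (g)_{B(x,t)}|^{p'} / |z−x|^{n+sp'} dz)^{1/p'} ≤ C (∫_{ℝ^n} |g(z) − g(x)|^{p'} / |z−x|^{n+sp'} dz)^{1/p'}, with C depending only on n, s, p'. -/

import Mathlib

/-!
Split `g z - (g)_B = (g z - g x) + (g x - (g)_B)` with `B = B(x, t)`. The first part is dominated
by the right-hand side directly. For the second, Jensen's inequality and `|w - x| < t` on `B` give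
`|g x - (g)_B|^p' ≤ t^(n + s p') |B|⁻¹ ∫ |g w - g x|^p' / |w - x|^(n + s p') dw`, while scaling
shows `∫_{|z - x| ≥ t} |z - x|^(-(n + s p')) dz = c t^(-s p')`; the powers of `t` cancel.
-/

open MeasureTheory ENNReal Metric Set Module

theorem convexOn_rpow_abs_sub {p : ℝ} (hp : 1 ≤ p) (c : ℝ) :
    ConvexOn ℝ univ (fun y : ℝ => |y - c| ^ p) := by
  have habs : ConvexOn ℝ univ (fun y : ℝ => |y - c|) := by
    simpa [Function.comp_def, neg_add_eq_sub] using convexOn_univ_norm.translate_right (-c)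
  have himage : (fun y : ℝ => |y - c|) '' univ = Ici 0 := by
    refine Subset.antisymm (image_subset_iff.2 fun y _ => abs_nonneg (y - c)) fun u hu => ?_
    exact ⟨u + c, trivial, by simpa using abs_of_nonneg (mem_Ici.1 hu)⟩
  refine ((himage ▸ convexOn_rpow hp).comp habs ?_ :)
  exact himage ▸ Real.monotoneOn_rpow_Ici_of_exponent_nonneg (by linarith)

theorem ofReal_rpow_abs_sub_setAverage_le {α : Type*} [MeasurableSpace α] {μ : Measure α}
    {s : Set α} {g : α → ℝ} {p : ℝ} (hp : 1 ≤ p) (h0 : μ s ≠ 0) (hs : μ s ≠ ∞)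
    (hg : IntegrableOn g s μ) (c : ℝ) :
    ENNReal.ofReal (|c - ⨍ x in s, g x ∂μ| ^ p) ≤
      (∫⁻ x in s, ENNReal.ofReal (|g x - c| ^ p) ∂μ) / μ s := by
  have hnonneg : ∀ x, 0 ≤ |g x - c| ^ p := fun x => by positivity
  by_cases hi : IntegrableOn (fun x => |g x - c| ^ p) s μ
  · have hcont : Continuous fun y : ℝ => |y - c| ^ p :=
      (continuous_abs.comp (continuous_sub_right c)).rpow_const fun _ => Or.inr (by linarith)
    rw [← ofReal_setAverage hi (ae_of_all _ hnonneg), abs_sub_comm]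
    exact ENNReal.ofReal_le_ofReal ((convexOn_rpow_abs_sub hp c).map_set_average_le
      hcont.continuousOn isClosed_univ h0 hs (ae_of_all _ fun _ => mem_univ _) hg hi)
  · have hmeas : AEStronglyMeasurable (fun x => |g x - c| ^ p) (μ.restrict s) :=
      ((hg.aestronglyMeasurable.sub aestronglyMeasurable_const).norm.aemeasurable.pow_const
        p).aestronglyMeasurable
    have htop : ∫⁻ x in s, ENNReal.ofReal (|g x - c| ^ p) ∂μ = ∞ := by
      by_contra h
      exact hi ((lintegral_ofReal_ne_top_iff_integrable hmeas (ae_of_all _ hnonneg)).1 h)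
    simp [htop, ENNReal.top_div_of_ne_top hs]

theorem rpow_abs_sub_le_mul_add (u b c : ℝ) {p : ℝ} (hp : 1 ≤ p) :
    |u - c| ^ p ≤ 2 ^ (p - 1) * (|u - b| ^ p + |b - c| ^ p) := by
  calc |u - c| ^ p ≤ (|u - b| + |b - c|) ^ p :=
        Real.rpow_le_rpow (abs_nonneg _) (abs_sub_le u b c) (by linarith)
    _ ≤ 2 ^ (p - 1) * (|u - b| ^ p + |b - c| ^ p) := by
        exact_mod_cast NNReal.rpow_add_le_mul_rpow_add_rpow ⟨_, abs_nonneg (u - b)⟩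
          ⟨_, abs_nonneg (b - c)⟩ hp

theorem lintegral_ofReal_rpow_abs_sub_div_le {α : Type*} [MeasurableSpace α] (ν : Measure α)
    {p : ℝ} (hp : 1 ≤ p) (u : α → ℝ) {w : α → ℝ} (hw : Measurable w) (hw0 : ∀ z, 0 ≤ w z)
    (b c : ℝ) :
    ∫⁻ z, ENNReal.ofReal (|u z - c| ^ p / w z) ∂ν ≤
      ENNReal.ofReal (2 ^ (p - 1)) * (∫⁻ z, ENNReal.ofReal (|u z - b| ^ p / w z) ∂ν +
        ENNReal.ofReal (|b - c| ^ p) * ∫⁻ z, ENNReal.ofReal (w z)⁻¹ ∂ν) := by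
  have hpoint : ∀ z, ENNReal.ofReal (|u z - c| ^ p / w z) ≤
      ENNReal.ofReal (2 ^ (p - 1)) * (ENNReal.ofReal (|u z - b| ^ p / w z) +
        ENNReal.ofReal (|b - c| ^ p) * ENNReal.ofReal (w z)⁻¹) := by
    intro z
    have hwz := hw0 z
    rw [← ENNReal.ofReal_mul (by positivity), ← ENNReal.ofReal_add (by positivity) (by positivity),
      ← ENNReal.ofReal_mul (by positivity), ← div_eq_mul_inv, ← add_div, ← mul_div_assoc]
    exact ENNReal.ofReal_le_ofReal
      (div_le_div_of_nonneg_right (rpow_abs_sub_le_mul_add (u z) b c hp) (hw0 z))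
  calc _ ≤ ∫⁻ z, ENNReal.ofReal (2 ^ (p - 1)) * (ENNReal.ofReal (|u z - b| ^ p / w z) +
        ENNReal.ofReal (|b - c| ^ p) * ENNReal.ofReal (w z)⁻¹) ∂ν := lintegral_mono hpoint
    _ = _ := by
        have hinv : Measurable fun z => ENNReal.ofReal (w z)⁻¹ := by fun_prop
        rw [lintegral_const_mul' _ _ ofReal_ne_top, lintegral_add_right _ (hinv.const_mul _),
          lintegral_const_mul _ hinv]

theorem setLIntegral_ball_le_ofReal_rpow_mul {E : Type*} [NormedAddCommGroup E]
    [MeasurableSpace E] [OpensMeasurableSpace E] (μ : Measure E) {F : E → ℝ} {x : E}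
    (hF : ∀ w, 0 ≤ F w) (hFx : F x = 0) {a : ℝ} (ha : 0 ≤ a) (t : ℝ) :
    ∫⁻ w in ball x t, ENNReal.ofReal (F w) ∂μ ≤
      ENNReal.ofReal (t ^ a) * ∫⁻ w, ENNReal.ofReal (F w / ‖w - x‖ ^ a) ∂μ := by
  rw [← lintegral_const_mul' _ _ ofReal_ne_top]
  refine (setLIntegral_mono' measurableSet_ball fun w hw => ?_).trans
    (setLIntegral_le_lintegral _ _)
  rcases eq_or_ne w x with rfl | hwx
  · simp [hFx]
  have hw0 : 0 < ‖w - x‖ := norm_pos_iff.2 (sub_ne_zero.2 hwx)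
  have hwt : ‖w - x‖ ≤ t := (mem_ball_iff_norm.1 hw).le
  rw [← ENNReal.ofReal_mul (by positivity [hw0.trans_le hwt]), mul_div_left_comm]
  exact ENNReal.ofReal_le_ofReal (le_mul_of_one_le_right (hF w)
    ((one_le_div (by positivity)).2 (Real.rpow_le_rpow hw0.le hwt ha)))

section AddHaar

variable {E : Type*} [NormedAddCommGroup E] [NormedSpace ℝ E] [FiniteDimensional ℝ E]
  [MeasurableSpace E] [BorelSpace E] (μ : Measure E) [μ.IsAddHaarMeasure]

theorem lintegral_eq_ofReal_pow_mul_lintegral_comp_add_smul (f : E → ℝ≥0∞) (x : E) {r : ℝ}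
    (hr : 0 < r) :
    ∫⁻ z, f z ∂μ = ENNReal.ofReal (r ^ finrank ℝ E) * ∫⁻ u, f (x + r • u) ∂μ := by
  have hscale : ∫⁻ u, f (x + r • u) ∂μ =
      ENNReal.ofReal (r ^ finrank ℝ E)⁻¹ * ∫⁻ z, f (x + z) ∂μ := by
    rw [← abs_of_pos (inv_pos.2 (pow_pos hr _)), ← smul_eq_mul, ← lintegral_smul_measure,
      ← Measure.map_addHaar_smul μ hr.ne']
    exact (lintegral_map_equiv (fun z => f (x + z)) (MeasurableEquiv.smul₀ r hr.ne')).symm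
  rw [hscale, ← mul_assoc, ← ENNReal.ofReal_mul (by positivity),
    mul_inv_cancel₀ (pow_pos hr _).ne', ENNReal.ofReal_one, one_mul, lintegral_add_left_eq_self]

theorem lintegral_compl_ball_rpow_neg (x : E) (a : ℝ) {r : ℝ} (hr : 0 < r) :
    ∫⁻ z in (ball x r)ᶜ, ENNReal.ofReal (‖z - x‖ ^ (-a)) ∂μ =
      ENNReal.ofReal (r ^ ((finrank ℝ E : ℝ) - a)) *
        ∫⁻ u in (ball 0 1)ᶜ, ENNReal.ofReal (‖u‖ ^ (-a)) ∂μ := by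
  have hpoint : ∀ u : E,
      (ball x r)ᶜ.indicator (fun z => ENNReal.ofReal (‖z - x‖ ^ (-a))) (x + r • u) =
        ENNReal.ofReal (r ^ (-a)) *
          (ball 0 1)ᶜ.indicator (fun u => ENNReal.ofReal (‖u‖ ^ (-a))) u := by
    intro u
    have hmem : x + r • u ∈ ball x r ↔ u ∈ ball 0 1 := by
      simp [dist_eq_norm, norm_smul, abs_of_pos hr, hr]
    by_cases hu : u ∈ ball 0 1
    · simp [hu, hmem.2 hu]
    · simp [hu, mt hmem.1 hu, norm_smul, abs_of_pos hr,
        ENNReal.ofReal_mul (Real.rpow_nonneg hr.le _), Real.mul_rpow hr.le (norm_nonneg u)]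
  rw [← lintegral_indicator measurableSet_ball.compl,
    lintegral_eq_ofReal_pow_mul_lintegral_comp_add_smul μ _ x hr, lintegral_congr hpoint,
    lintegral_const_mul' _ _ ofReal_ne_top, lintegral_indicator measurableSet_ball.compl,
    ← mul_assoc, ← ENNReal.ofReal_mul (by positivity), ← Real.rpow_natCast,
    ← Real.rpow_add hr, ← sub_eq_add_neg]

theorem lintegral_compl_ball_rpow_neg_lt_top {a : ℝ} (ha : (finrank ℝ E : ℝ) < a) :
    ∫⁻ u in (ball (0 : E) 1)ᶜ, ENNReal.ofReal (‖u‖ ^ (-a)) ∂μ < ∞ := by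
  have ha0 : 0 < a := (Nat.cast_nonneg _).trans_lt ha
  calc ∫⁻ u in (ball (0 : E) 1)ᶜ, ENNReal.ofReal (‖u‖ ^ (-a)) ∂μ
      ≤ ∫⁻ u, ENNReal.ofReal (2 ^ a) * ENNReal.ofReal ((1 + ‖u‖) ^ (-a)) ∂μ := by
        refine (setLIntegral_mono' measurableSet_ball.compl fun u hu => ?_).trans
          (setLIntegral_le_lintegral _ _)
        have hu : 1 ≤ ‖u‖ := by simpa using hu
        rw [← ENNReal.ofReal_mul (by positivity)]
        refine ENNReal.ofReal_le_ofReal ?_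
        calc ‖u‖ ^ (-a) = 2 ^ a * (2 * ‖u‖) ^ (-a) := by
              rw [Real.mul_rpow zero_le_two (norm_nonneg u), Real.rpow_neg zero_le_two,
                mul_inv_cancel_left₀ (by positivity)]
          _ ≤ 2 ^ a * (1 + ‖u‖) ^ (-a) := by
              refine mul_le_mul_of_nonneg_left ?_ (by positivity)
              exact Real.rpow_le_rpow_of_nonpos (by positivity) (by linarith) (by linarith)
    _ < ∞ := by
        rw [lintegral_const_mul' _ _ ofReal_ne_top]
        exact ENNReal.mul_lt_top ofReal_lt_top (finite_integral_one_add_norm ha)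

theorem ofReal_rpow_abs_sub_setAverage_ball_le {p a : ℝ} (hp : 1 ≤ p) (ha : 0 ≤ a) {g : E → ℝ}
    (hg : LocallyIntegrable g μ) (x : E) {t : ℝ} (ht : 0 < t) :
    ENNReal.ofReal (|g x - ⨍ w in ball x t, g w ∂μ| ^ p) ≤
      ENNReal.ofReal (t ^ a) * (∫⁻ z, ENNReal.ofReal (|g z - g x| ^ p / ‖z - x‖ ^ a) ∂μ) /
        μ (ball x t) := by
  refine (ofReal_rpow_abs_sub_setAverage_le hp (measure_ball_pos μ x ht).ne'
    measure_ball_lt_top.ne ((hg.integrableOn_isCompact (isCompact_closedBall x t)).mono_set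
      ball_subset_closedBall) (g x)).trans ?_
  gcongr
  exact setLIntegral_ball_le_ofReal_rpow_mul μ (F := fun w => |g w - g x| ^ p)
    (fun w => by positivity) (by simp [Real.zero_rpow (by linarith : p ≠ 0)]) ha t

theorem lintegral_compl_ball_rpow_abs_sub_setAverage_le {p a : ℝ} (hp : 1 ≤ p)
    (ha : (finrank ℝ E : ℝ) < a) {g : E → ℝ} (hg : LocallyIntegrable g μ) (x : E) {t : ℝ}
    (ht : 0 < t) :
    ∫⁻ z in (ball x t)ᶜ, ENNReal.ofReal (|g z - ⨍ w in ball x t, g w ∂μ| ^ p / ‖z - x‖ ^ a) ∂μ ≤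
      ENNReal.ofReal (2 ^ (p - 1)) *
        (1 + (∫⁻ u in (ball 0 1)ᶜ, ENNReal.ofReal (‖u‖ ^ (-a)) ∂μ) / μ (ball 0 1)) *
        ∫⁻ z, ENNReal.ofReal (|g z - g x| ^ p / ‖z - x‖ ^ a) ∂μ := by
  set I := ∫⁻ z, ENNReal.ofReal (|g z - g x| ^ p / ‖z - x‖ ^ a) ∂μ
  set T := ∫⁻ u in (ball (0 : E) 1)ᶜ, ENNReal.ofReal (‖u‖ ^ (-a)) ∂μ
  set V := μ (ball (0 : E) 1)
  set d : ℝ := (finrank ℝ E : ℝ)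
  have hsplit := lintegral_ofReal_rpow_abs_sub_div_le (μ.restrict (ball x t)ᶜ) hp g
    (w := fun z => ‖z - x‖ ^ a) (by fun_prop) (fun z => by positivity) (g x)
    (⨍ w in ball x t, g w ∂μ)
  have htail : ∫⁻ z in (ball x t)ᶜ, ENNReal.ofReal (‖z - x‖ ^ a)⁻¹ ∂μ =
      ENNReal.ofReal (t ^ (d - a)) * T := by
    simp_rw [← Real.rpow_neg (norm_nonneg _)]
    exact lintegral_compl_ball_rpow_neg μ x a ht
  have hscale : ENNReal.ofReal (t ^ a) * ENNReal.ofReal (t ^ (d - a)) = ENNReal.ofReal (t ^ d) := by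
    rw [← ENNReal.ofReal_mul (by positivity), ← Real.rpow_add ht, add_sub_cancel]
  have hmean : ENNReal.ofReal (|g x - ⨍ w in ball x t, g w ∂μ| ^ p) *
      (ENNReal.ofReal (t ^ (d - a)) * T) ≤ T / V * I :=
    calc _ ≤ ENNReal.ofReal (t ^ a) * I / (ENNReal.ofReal (t ^ d) * V) *
          (ENNReal.ofReal (t ^ (d - a)) * T) := by
          have hvol : μ (ball x t) = ENNReal.ofReal (t ^ d) * V := by
            rw [Measure.addHaar_ball_of_pos μ x ht, Real.rpow_natCast]
          rw [← hvol]
          gcongr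
          exact ofReal_rpow_abs_sub_setAverage_ball_le μ hp ((Nat.cast_nonneg _).trans ha.le) hg x
            ht
      _ = ENNReal.ofReal (t ^ d) * (T * I) / (ENNReal.ofReal (t ^ d) * V) := by
          rw [← hscale]; simp only [div_eq_mul_inv]; ring
      _ = T / V * I := by
          rw [ENNReal.mul_div_mul_left _ _ (ENNReal.ofReal_pos.2 (by positivity)).ne' ofReal_ne_top,
            ENNReal.mul_div_right_comm]
  calc _ ≤ ENNReal.ofReal (2 ^ (p - 1)) * (I + T / V * I) := by
        rw [htail] at hsplit
        exact hsplit.trans (by gcongr; exact setLIntegral_le_lintegral _ _)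
    _ = _ := by ring

end AddHaar

/-- There is `C = C(n,s,p')` such that for locally integrable `g`, all `x` and
`t > 0`,
`(∫_{ℝⁿ∖B(x,2t)} |g(z) − (g)_{B(x,t)}|^{p'}/|z−x|^{n+sp'} dz)^{1/p'}
   ≤ C (∫_{ℝⁿ} |g(z) − g(x)|^{p'}/|z−x|^{n+sp'} dz)^{1/p'}`. -/
theorem stmt_10 (n : ℕ) (s p' : ℝ) (hs : s ∈ Set.Ioo (0 : ℝ) 1) (hp' : 1 < p') :
    ∃ C : ℝ≥0∞, 0 < C ∧ C ≠ ∞ ∧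
      ∀ g : EuclideanSpace ℝ (Fin n) → ℝ, LocallyIntegrable g volume →
      ∀ (x : EuclideanSpace ℝ (Fin n)) (t : ℝ), 0 < t →
        (∫⁻ z in (Metric.ball x (2 * t))ᶜ,
            ENNReal.ofReal (|g z - ⨍ w in Metric.ball x t, g w| ^ p'
              / ‖z - x‖ ^ ((n : ℝ) + s * p'))) ^ (1 / p')
          ≤ C * (∫⁻ z, ENNReal.ofReal (|g z - g x| ^ p'
              / ‖z - x‖ ^ ((n : ℝ) + s * p'))) ^ (1 / p') := by
  have ha : (finrank ℝ (EuclideanSpace ℝ (Fin n)) : ℝ) < n + s * p' := by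
    rw [finrank_euclideanSpace_fin]
    nlinarith [hs.1]
  set C : ℝ≥0∞ := ENNReal.ofReal (2 ^ (p' - 1)) *
    (1 + (∫⁻ u : EuclideanSpace ℝ (Fin n) in (ball 0 1)ᶜ, ENNReal.ofReal (‖u‖ ^ (-(n + s * p')))) /
      volume (ball (0 : EuclideanSpace ℝ (Fin n)) 1))
  have hC0 : C ≠ 0 := mul_ne_zero (ENNReal.ofReal_pos.2 (by positivity)).ne' (by simp)
  have hCtop : C ≠ ∞ := mul_ne_top ofReal_ne_top (add_ne_top.2 ⟨one_ne_top,
    (div_lt_top (lintegral_compl_ball_rpow_neg_lt_top volume ha).ne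
      (measure_ball_pos volume 0 one_pos).ne').ne⟩)
  refine ⟨C ^ (1 / p'), rpow_pos (pos_iff_ne_zero.2 hC0) hCtop,
    rpow_ne_top_of_nonneg (by positivity) hCtop, fun g hg x t ht => ?_⟩
  rw [← mul_rpow_of_nonneg _ _ (by positivity)]
  refine rpow_le_rpow ((lintegral_mono_set (compl_subset_compl.2 (ball_subset_ball ?_))).trans
    (lintegral_compl_ball_rpow_abs_sub_setAverage_le volume hp'.le ha hg x ht)) (by positivity)
  linarith
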